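/- Let n ≥ 3 be odd and E ⊆ ℤ_n^d. For y ∈ ℤ_n^d and t ∈ ℤ_n, let ν_y(t) = |{(x) ∈ E : ‖x − y‖ = t}| where ‖z‖ = z_1² + ... + z_d². Then ∑_{y ∈ E} ∑_{t ∈ ℤ_n} ν_y(t)² ≤ |E|³/n + τ(n)·n^{2d−1}·|E| / γ(n)^{d−1}. -/

import Mathlib

open Finset

noncomputable def chi (n : ℕ) (t : ZMod n) : ℂ :=
  Complex.exp (2 * Real.pi * Complex.I * (t.val : ℂ) / (n : ℂ))

def dot {n d : ℕ} (x y : Fin d → ZMod n) : ZMod n := ∑ i, x i * y i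

def nrm {n d : ℕ} (z : Fin d → ZMod n) : ZMod n := ∑ i, z i ^ 2

noncomputable def ft (n d : ℕ) [NeZero n] (f : (Fin d → ZMod n) → ℂ)
    (m : Fin d → ZMod n) : ℂ :=
  (n : ℂ)⁻¹ ^ d * ∑ x : Fin d → ZMod n, f x * chi n (-(dot x m))

set_option linter.unusedSectionVars false


lemma chi_eq (n : ℕ) [NeZero n] (t : ZMod n) : chi n t = ZMod.stdAddChar t := by
  rw [ZMod.stdAddChar_apply, ZMod.toCircle_apply, chi]

lemma chi_add (n : ℕ) [NeZero n] (a b : ZMod n) : chi n (a + b) = chi n a * chi n b := by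
  simp [chi_eq, AddChar.map_add_eq_mul]

lemma chi_zero (n : ℕ) [NeZero n] : chi n 0 = 1 := by simp [chi_eq]

lemma chi_sum (n : ℕ) [NeZero n] {ι : Type*} (s : Finset ι) (f : ι → ZMod n) :
    chi n (∑ i ∈ s, f i) = ∏ i ∈ s, chi n (f i) := by
  induction s using Finset.cons_induction with
  | empty => simp [chi_zero]
  | cons a s ha ih => rw [Finset.sum_cons, Finset.prod_cons, chi_add, ih]

lemma sum_chi (n : ℕ) [NeZero n] (b : ZMod n) :
    ∑ x : ZMod n, chi n (x * b) = if b = 0 then (n : ℂ) else 0 := by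
  simp only [chi_eq]
  rw [AddChar.sum_mulShift b (ZMod.isPrimitive_stdAddChar n), ZMod.card n]
  split <;> simp

lemma chi_conj (n : ℕ) [NeZero n] (a : ZMod n) :
    (starRingEnd ℂ) (chi n a) = chi n (-a) := by
  have h : chi n (-a) * chi n a = 1 := by rw [← chi_add]; simp [chi_zero]
  have h2 : (starRingEnd ℂ) (chi n a) * chi n a = 1 := by
    rw [chi, ← Complex.exp_conj, ← Complex.exp_add]
    have : (starRingEnd ℂ) (2 * ↑Real.pi * Complex.I * (a.val : ℂ) / n)
        = -(2 * ↑Real.pi * Complex.I * (a.val : ℂ) / n) := by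
      simp only [map_div₀, map_mul, Complex.conj_natCast, Complex.conj_ofReal,
        Complex.conj_I, map_ofNat]
      ring
    rw [this, neg_add_cancel, Complex.exp_zero]
  calc (starRingEnd ℂ) (chi n a) = (starRingEnd ℂ) (chi n a) * (chi n a * chi n (-a)) := by
        rw [mul_comm (chi n a), h, mul_one]
    _ = chi n (-a) := by rw [← mul_assoc, h2, one_mul]

lemma card_dvd_val (n c : ℕ) [NeZero n] (hc : c ∣ n) (hc0 : 0 < c) :
    ((univ : Finset (ZMod n)).filter (fun s => c ∣ s.val)).card = n / c := by
  have hn : 0 < n := Nat.pos_of_ne_zero (NeZero.ne n)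
  rw [show n / c = (Finset.range (n / c)).card from (Finset.card_range _).symm]
  apply Finset.card_bij' (fun (s : ZMod n) _ => s.val / c)
      (fun (m : ℕ) _ => ((c * m : ℕ) : ZMod n))
  · intro s hs
    simp only [mem_filter, mem_univ, true_and] at hs
    exact Finset.mem_range.2 (Nat.div_lt_div_of_lt_of_dvd hc (ZMod.val_lt s))
  · intro m hm
    have hlt : c * m < n := by
      calc c * m < c * (n / c) := by
            exact mul_lt_mul_of_pos_left (Finset.mem_range.1 hm) hc0
        _ = n := Nat.mul_div_cancel' hc
    simp only [mem_filter, mem_univ, true_and]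
    rw [ZMod.val_natCast_of_lt hlt]
    exact Dvd.intro m rfl
  · intro s hs
    simp only [mem_filter, mem_univ, true_and] at hs
    rw [Nat.mul_div_cancel' hs, ZMod.natCast_rightInverse s]
  · intro m hm
    have hlt : c * m < n := by
      calc c * m < c * (n / c) := mul_lt_mul_of_pos_left (Finset.mem_range.1 hm) hc0
        _ = n := Nat.mul_div_cancel' hc
    rw [ZMod.val_natCast_of_lt hlt, Nat.mul_div_cancel_left m hc0]

lemma dvd_mul_iff (n a b : ℕ) (hn : 0 < n) : n ∣ a * b ↔ (n / n.gcd a) ∣ b := by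
  set g := n.gcd a with hgd
  have hg : 0 < g := Nat.gcd_pos_of_pos_left a hn
  obtain ⟨n', hn'⟩ : g ∣ n := Nat.gcd_dvd_left n a
  obtain ⟨a', ha'⟩ : g ∣ a := Nat.gcd_dvd_right n a
  have hn'e : n / g = n' := Nat.div_eq_of_eq_mul_right hg hn'
  have ha'e : a / g = a' := Nat.div_eq_of_eq_mul_right hg ha'
  have hco : Nat.Coprime n' a' := by
    rw [← hn'e, ← ha'e, hgd]; exact Nat.coprime_div_gcd_div_gcd hg
  rw [hn'e]
  constructor
  · intro h
    rw [hn', ha', mul_assoc, Nat.mul_dvd_mul_iff_left hg] at h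
    exact (Nat.Coprime.dvd_mul_left hco).1 h
  · intro h
    rw [hn', ha', mul_assoc]
    exact mul_dvd_mul_left g ((Nat.Coprime.dvd_mul_left hco).2 h)

lemma K_eq (n : ℕ) [NeZero n] (s : ZMod n) :
    ((univ : Finset (ZMod n)).filter (fun u => s * u = 0)).card = n.gcd s.val := by
  have hn : 0 < n := Nat.pos_of_ne_zero (NeZero.ne n)
  have hpred : ∀ u : ZMod n, (s * u = 0) ↔ ((n / n.gcd s.val) ∣ u.val) := by
    intro u
    rw [show s * u = ((s.val * u.val : ℕ) : ZMod n) by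
      push_cast [ZMod.natCast_rightInverse s, ZMod.natCast_rightInverse u]; ring]
    rw [ZMod.natCast_eq_zero_iff]
    exact dvd_mul_iff n s.val u.val hn
  simp only [hpred]
  rw [card_dvd_val n _ (Nat.div_dvd_of_dvd (Nat.gcd_dvd_left n s.val))
    (Nat.div_pos (Nat.le_of_dvd hn (Nat.gcd_dvd_left n s.val)) (Nat.gcd_pos_of_pos_left _ hn))]
  exact Nat.div_div_self (Nat.gcd_dvd_left n s.val) hn.ne'

lemma K_le (n : ℕ) [NeZero n] (s : ZMod n) (hs : s ≠ 0) :
    n.gcd s.val ≤ n / n.minFac := by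
  have hn : 0 < n := Nat.pos_of_ne_zero (NeZero.ne n)
  have hdvd : n.gcd s.val ∣ n := Nat.gcd_dvd_left n s.val
  have hne : n.gcd s.val ≠ n := by
    intro h
    have hdv : n ∣ s.val := by
      conv_lhs => rw [← h]
      exact Nat.gcd_dvd_right n s.val
    have hv : s.val = 0 := Nat.eq_zero_of_dvd_of_lt hdv (ZMod.val_lt s)
    exact hs (by rw [← ZMod.natCast_rightInverse s, hv, Nat.cast_zero])
  have hlt : n.gcd s.val < n := lt_of_le_of_ne (Nat.le_of_dvd hn hdvd) hne
  have h2 : 2 ≤ n / n.gcd s.val := by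
    have hpos := Nat.div_pos (Nat.le_of_dvd hn hdvd) (Nat.gcd_pos_of_pos_left _ hn)
    have hone : n / n.gcd s.val = 1 → n.gcd s.val = n := by
      intro h
      have hmm := Nat.mul_div_cancel' hdvd
      rw [h, mul_one] at hmm
      exact hmm
    rcases Nat.lt_or_ge (n / n.gcd s.val) 2 with h | h
    · exfalso; exact hne (hone (by omega))
    · exact h
  have hmin : n.minFac ≤ n / n.gcd s.val :=
    Nat.minFac_le_of_dvd h2 (Nat.div_dvd_of_dvd hdvd)
  rw [Nat.le_div_iff_mul_le (Nat.minFac_pos n)]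
  calc n.gcd s.val * n.minFac ≤ n.gcd s.val * (n / n.gcd s.val) :=
        Nat.mul_le_mul_left _ hmin
    _ = n := Nat.mul_div_cancel' hdvd

lemma sum_gcd_le (n : ℕ) [NeZero n] :
    ∑ s ∈ (univ : Finset (ZMod n)).erase 0, n.gcd s.val ≤ n.divisors.card * n := by
  have hn : 0 < n := Nat.pos_of_ne_zero (NeZero.ne n)
  rw [← Finset.sum_fiberwise_of_maps_to (g := fun s : ZMod n => n.gcd s.val)
    (t := n.divisors) (fun s _ => Nat.mem_divisors.2 ⟨Nat.gcd_dvd_left n s.val, hn.ne'⟩)]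
  calc ∑ g ∈ n.divisors, ∑ s ∈ ((univ : Finset (ZMod n)).erase 0).filter
        (fun s => n.gcd s.val = g), n.gcd s.val
      ≤ ∑ g ∈ n.divisors, n := by
        apply Finset.sum_le_sum
        intro g hg
        have hgpos : 0 < g := Nat.pos_of_mem_divisors hg
        have hsub : ((univ : Finset (ZMod n)).erase 0).filter (fun s => n.gcd s.val = g)
            ⊆ (univ : Finset (ZMod n)).filter (fun s => g ∣ s.val) := by
          intro s hs
          simp only [mem_filter, mem_erase, mem_univ, true_and] at hs ⊢
          exact hs.2 ▸ Nat.gcd_dvd_right n s.val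
        calc ∑ s ∈ ((univ : Finset (ZMod n)).erase 0).filter (fun s => n.gcd s.val = g),
              n.gcd s.val
            = ∑ s ∈ ((univ : Finset (ZMod n)).erase 0).filter (fun s => n.gcd s.val = g), g := by
              apply Finset.sum_congr rfl; intro s hs
              exact (Finset.mem_filter.1 hs).2
          _ = (((univ : Finset (ZMod n)).erase 0).filter (fun s => n.gcd s.val = g)).card * g := by
              rw [Finset.sum_const, smul_eq_mul]
          _ ≤ (n / g) * g := by
              apply Nat.mul_le_mul_right
              calc (((univ : Finset (ZMod n)).erase 0).filter (fun s => n.gcd s.val = g)).card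
                  ≤ ((univ : Finset (ZMod n)).filter (fun s => g ∣ s.val)).card :=
                    Finset.card_le_card hsub
                _ = n / g := card_dvd_val n g (Nat.mem_divisors.1 hg).1 hgpos
          _ ≤ n := Nat.div_mul_le_self n g
    _ = n.divisors.card * n := by rw [Finset.sum_const, smul_eq_mul]

variable {n d : ℕ} [NeZero n]

lemma step0 (E : Finset (Fin d → ZMod n)) (y : Fin d → ZMod n) :
    ∑ t : ZMod n, ((E.filter (fun x => nrm (x - y) = t)).card : ℝ) ^ 2
    = (((E ×ˢ E).filter (fun p => nrm (p.1 - y) = nrm (p.2 - y))).card : ℝ) := by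
  have h1 : ∀ t : ZMod n, (E.filter (fun x => nrm (x - y) = t)).card ^ 2
      = (((E ×ˢ E).filter (fun p => nrm (p.1 - y) = nrm (p.2 - y))).filter
          (fun p => nrm (p.1 - y) = t)).card := by
    intro t
    have : ((E ×ˢ E).filter (fun p => nrm (p.1 - y) = nrm (p.2 - y))).filter
          (fun p => nrm (p.1 - y) = t)
        = (E.filter (fun x => nrm (x - y) = t)) ×ˢ (E.filter (fun x => nrm (x - y) = t)) := by
      ext p
      simp only [mem_filter, mem_product]
      constructor
      · rintro ⟨⟨⟨hp1, hp2⟩, heq⟩, ht⟩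
        exact ⟨⟨hp1, ht⟩, ⟨hp2, by rw [← heq, ht]⟩⟩
      · rintro ⟨⟨hp1, ht1⟩, ⟨hp2, ht2⟩⟩
        exact ⟨⟨⟨hp1, hp2⟩, by rw [ht1, ht2]⟩, ht1⟩
    rw [this, Finset.card_product, sq]
  have h2 : (((E ×ˢ E).filter (fun p => nrm (p.1 - y) = nrm (p.2 - y))).card : ℕ)
      = ∑ t : ZMod n, (((E ×ˢ E).filter (fun p => nrm (p.1 - y) = nrm (p.2 - y))).filter
          (fun p => nrm (p.1 - y) = t)).card :=
    Finset.card_eq_sum_card_fiberwise (fun p _ => Finset.mem_univ _)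
  rw [h2]
  push_cast
  exact Finset.sum_congr rfl (fun t _ => by exact_mod_cast congrArg (Nat.cast : ℕ → ℝ) (h1 t))

set_option maxHeartbeats 1000000 in
lemma step1C (E : Finset (Fin d → ZMod n)) (y : Fin d → ZMod n) :
    ∑ s : ZMod n, (Complex.normSq (∑ x ∈ E, chi n (s * nrm (x - y))) : ℂ)
    = (n : ℂ) * (((E ×ˢ E).filter (fun p => nrm (p.1 - y) = nrm (p.2 - y))).card : ℂ) := by
  have hconj : ∀ s : ZMod n, (starRingEnd ℂ) (∑ x ∈ E, chi n (s * nrm (x - y)))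
      = ∑ x ∈ E, chi n (-(s * nrm (x - y))) := by
    intro s; rw [map_sum]; exact sum_congr rfl fun x _ => chi_conj n _
  calc ∑ s : ZMod n, (Complex.normSq (∑ x ∈ E, chi n (s * nrm (x - y))) : ℂ)
      = ∑ s : ZMod n, (∑ x ∈ E, chi n (s * nrm (x - y))) *
          (∑ x' ∈ E, chi n (-(s * nrm (x' - y)))) := by
        refine sum_congr rfl fun s _ => ?_
        rw [← hconj s, Complex.mul_conj]
    _ = ∑ s : ZMod n, ∑ x ∈ E, ∑ x' ∈ E, chi n (s * (nrm (x - y) - nrm (x' - y))) := by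
        refine sum_congr rfl fun s _ => ?_
        rw [Finset.sum_mul_sum]
        refine sum_congr rfl fun x _ => sum_congr rfl fun x' _ => ?_
        rw [← chi_add]; congr 1; ring
    _ = ∑ x ∈ E, ∑ x' ∈ E, ∑ s : ZMod n, chi n (s * (nrm (x - y) - nrm (x' - y))) := by
        rw [Finset.sum_comm]
        exact sum_congr rfl fun x _ => Finset.sum_comm
    _ = ∑ x ∈ E, ∑ x' ∈ E, if nrm (x - y) = nrm (x' - y) then (n : ℂ) else 0 := by
        refine sum_congr rfl fun x _ => sum_congr rfl fun x' _ => ?_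
        rw [sum_chi]
        simp [sub_eq_zero]
    _ = ∑ p ∈ E ×ˢ E, if nrm (p.1 - y) = nrm (p.2 - y) then (n : ℂ) else 0 := by
        rw [Finset.sum_product]
    _ = (n : ℂ) * (((E ×ˢ E).filter (fun p => nrm (p.1 - y) = nrm (p.2 - y))).card : ℂ) := by
        rw [← Finset.sum_filter, Finset.sum_const, nsmul_eq_mul, mul_comm]

lemma two_unit (hodd : Odd n) : IsUnit (2 : ZMod n) := by
  have h : Nat.Coprime 2 n := Nat.coprime_two_left.mpr hodd
  have := (ZMod.isUnit_iff_coprime 2 n).2 h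
  simpa using this

set_option maxHeartbeats 1000000 in
lemma step2C (hodd : Odd n) (E : Finset (Fin d → ZMod n)) (s : ZMod n) :
    ∑ y : Fin d → ZMod n, (Complex.normSq (∑ x ∈ E, chi n (s * nrm (x - y))) : ℂ)
    = (n : ℂ) ^ d * (((E ×ˢ E).filter (fun p => ∀ i, s * p.1 i = s * p.2 i)).card : ℂ) := by
  have h2u : IsUnit (2 : ZMod n) := two_unit hodd
  have hconj : ∀ y : Fin d → ZMod n, (starRingEnd ℂ) (∑ x ∈ E, chi n (s * nrm (x - y)))
      = ∑ x ∈ E, chi n (-(s * nrm (x - y))) := by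
    intro y; rw [map_sum]; exact sum_congr rfl fun x _ => chi_conj n _
  have key : ∀ x x' y : Fin d → ZMod n, s * (nrm (x - y) - nrm (x' - y))
      = s * (nrm x - nrm x') + ∑ i, (y i * (-(2 * s * (x i - x' i)))) := by
    intro x x' y
    simp only [nrm, Pi.sub_apply, ← Finset.sum_sub_distrib, Finset.mul_sum,
      ← Finset.sum_add_distrib]
    exact Finset.sum_congr rfl fun i _ => by ring
  have hcond : ∀ z : ZMod n, (-(2 * s * z) = 0) ↔ s * z = 0 := by
    intro z
    rw [neg_eq_zero, mul_assoc, h2u.mul_right_eq_zero]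
  have hone : ∀ x x' : Fin d → ZMod n, (∀ i, s * x i = s * x' i) →
      chi n (s * (nrm x - nrm x')) = 1 := by
    intro x x' h
    have hz : s * (nrm x - nrm x') = 0 := by
      simp only [nrm, ← Finset.sum_sub_distrib, Finset.mul_sum]
      apply Finset.sum_eq_zero
      intro i _
      calc s * (x i ^ 2 - x' i ^ 2) = (x i + x' i) * (s * x i - s * x' i) := by ring
        _ = 0 := by rw [h i]; ring
    rw [hz, chi_zero]
  have hinner : ∀ x x' : Fin d → ZMod n,
      (∑ y : Fin d → ZMod n, ∏ i, chi n (y i * (-(2 * s * (x i - x' i)))))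
      = if (∀ i, s * x i = s * x' i) then (n : ℂ) ^ d else 0 := by
    intro x x'
    have hps := Finset.sum_prod_piFinset (univ : Finset (ZMod n))
      (fun i u => chi n (u * (-(2 * s * (x i - x' i)))))
    rw [← Fintype.piFinset_univ, hps]
    have hfac : ∀ i : Fin d, (∑ u : ZMod n, chi n (u * (-(2 * s * (x i - x' i)))))
        = if s * x i = s * x' i then (n : ℂ) else 0 := by
      intro i
      rw [sum_chi]
      congr 1
      rw [eq_iff_iff, hcond, mul_sub, sub_eq_zero]
    rw [Finset.prod_congr rfl fun i _ => hfac i]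
    by_cases h : ∀ i, s * x i = s * x' i
    · rw [if_pos h, Finset.prod_congr rfl fun i _ => if_pos (h i), Finset.prod_const,
        Finset.card_univ, Fintype.card_fin]
    · rw [if_neg h]
      push_neg at h
      obtain ⟨i, hi⟩ := h
      exact Finset.prod_eq_zero (Finset.mem_univ i) (if_neg hi)
  calc ∑ y : Fin d → ZMod n, (Complex.normSq (∑ x ∈ E, chi n (s * nrm (x - y))) : ℂ)
      = ∑ y : Fin d → ZMod n, (∑ x ∈ E, chi n (s * nrm (x - y))) *
          (∑ x' ∈ E, chi n (-(s * nrm (x' - y)))) := by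
        refine sum_congr rfl fun y _ => ?_
        rw [← hconj y, Complex.mul_conj]
    _ = ∑ y : Fin d → ZMod n, ∑ x ∈ E, ∑ x' ∈ E,
          chi n (s * (nrm (x - y) - nrm (x' - y))) := by
        refine sum_congr rfl fun y _ => ?_
        rw [Finset.sum_mul_sum]
        refine sum_congr rfl fun x _ => sum_congr rfl fun x' _ => ?_
        rw [← chi_add]; congr 1; ring
    _ = ∑ x ∈ E, ∑ x' ∈ E, ∑ y : Fin d → ZMod n,
          chi n (s * (nrm (x - y) - nrm (x' - y))) := by
        rw [Finset.sum_comm]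
        exact sum_congr rfl fun x _ => Finset.sum_comm
    _ = ∑ x ∈ E, ∑ x' ∈ E, (if (∀ i, s * x i = s * x' i) then (n : ℂ) ^ d else 0) := by
        refine sum_congr rfl fun x _ => sum_congr rfl fun x' _ => ?_
        have : ∀ y : Fin d → ZMod n, chi n (s * (nrm (x - y) - nrm (x' - y)))
            = chi n (s * (nrm x - nrm x')) * ∏ i, chi n (y i * (-(2 * s * (x i - x' i)))) := by
          intro y; rw [key, chi_add, chi_sum]
        rw [Finset.sum_congr rfl (fun y _ => this y), ← Finset.mul_sum, hinner]
        by_cases h : ∀ i, s * x i = s * x' i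
        · rw [hone x x' h, one_mul]
        · rw [if_neg h, mul_zero]
    _ = ∑ p ∈ E ×ˢ E, (if (∀ i, s * p.1 i = s * p.2 i) then (n : ℂ) ^ d else 0) := by
        rw [Finset.sum_product]
    _ = (n : ℂ) ^ d * (((E ×ˢ E).filter (fun p => ∀ i, s * p.1 i = s * p.2 i)).card : ℂ) := by
        rw [← Finset.sum_filter, Finset.sum_const, nsmul_eq_mul, mul_comm]

lemma coset_card (s a : ZMod n) :
    ((univ : Finset (ZMod n)).filter (fun u => s * a = s * u)).card = n.gcd s.val := by
  rw [← K_eq n s]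
  apply Finset.card_bij' (fun (u : ZMod n) _ => u - a) (fun (u : ZMod n) _ => u + a)
  · intro u hu
    simp only [mem_filter, mem_univ, true_and] at hu ⊢
    rw [mul_sub, ← hu, sub_self]
  · intro u hu
    simp only [mem_filter, mem_univ, true_and] at hu ⊢
    rw [mul_add, hu, zero_add]
  · intro u _
    exact sub_add_cancel u a
  · intro u _
    exact add_sub_cancel_right u a

lemma pair_count (E : Finset (Fin d → ZMod n)) (s : ZMod n) :
    ((E ×ˢ E).filter (fun p => ∀ i, s * p.1 i = s * p.2 i)).card
    ≤ E.card * (n.gcd s.val) ^ d := by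
  rw [Finset.card_eq_sum_card_fiberwise
    (f := fun p : (Fin d → ZMod n) × (Fin d → ZMod n) => p.1) (t := E)
    (fun p hp => (Finset.mem_product.1 (Finset.mem_filter.1 hp).1).1)]
  have hx : ∀ x ∈ E, (((E ×ˢ E).filter (fun p => ∀ i, s * p.1 i = s * p.2 i)).filter
      (fun p => p.1 = x)).card ≤ (n.gcd s.val) ^ d := by
    intro x _
    have hstep : (((E ×ˢ E).filter (fun p => ∀ i, s * p.1 i = s * p.2 i)).filter
        (fun p => p.1 = x)).card
        ≤ ((univ : Finset (Fin d → ZMod n)).filter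
            (fun x' => ∀ i, s * x i = s * x' i)).card := by
      apply Finset.card_le_card_of_injOn (fun p => p.2)
      · intro p hp
        simp only [mem_coe, mem_filter, mem_univ, true_and, mem_product] at hp ⊢
        intro i
        rw [← hp.2]
        exact hp.1.2 i
      · intro p hp q hq hpq
        simp only [mem_coe, mem_filter] at hp hq
        exact Prod.ext (hp.2.trans hq.2.symm) hpq
    refine hstep.trans ?_
    have hpi : (univ : Finset (Fin d → ZMod n)).filter (fun x' => ∀ i, s * x i = s * x' i)
        = Fintype.piFinset (fun i => (univ : Finset (ZMod n)).filter
            (fun u => s * x i = s * u)) := by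
      ext f
      simp [Fintype.mem_piFinset]
    rw [hpi, Fintype.card_piFinset]
    apply le_of_eq
    calc ∏ i, ((univ : Finset (ZMod n)).filter (fun u => s * x i = s * u)).card
        = ∏ i : Fin d, n.gcd s.val := Finset.prod_congr rfl fun i _ => coset_card s (x i)
      _ = (n.gcd s.val) ^ d := by rw [Finset.prod_const, Finset.card_univ, Fintype.card_fin]
  calc ∑ x ∈ E, (((E ×ˢ E).filter (fun p => ∀ i, s * p.1 i = s * p.2 i)).filter
        (fun p => p.1 = x)).card
      ≤ ∑ _x ∈ E, (n.gcd s.val) ^ d := Finset.sum_le_sum hx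
    _ = E.card * (n.gcd s.val) ^ d := by rw [Finset.sum_const, smul_eq_mul]

set_option maxHeartbeats 1000000 in
theorem stmt10 (n d : ℕ) [NeZero n] (hodd : Odd n) (hn3 : 3 ≤ n) (hd : 1 ≤ d)
    (E : Finset (Fin d → ZMod n)) :
    ∑ y ∈ E, ∑ t : ZMod n,
      ((E.filter (fun x => nrm (x - y) = t)).card : ℝ) ^ 2
      ≤ (E.card : ℝ) ^ 3 / (n : ℝ) +
        (n.divisors.card : ℝ) * (n : ℝ) ^ (2 * d - 1) * (E.card : ℝ) /
          (n.minFac : ℝ) ^ (d - 1) := by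
  have hnn : 0 < n := Nat.pos_of_ne_zero (NeZero.ne n)
  have hn0 : (0 : ℝ) < n := by exact_mod_cast hnn
  have hγ0 : (0 : ℝ) < n.minFac := by exact_mod_cast n.minFac_pos
  -- real versions of the two Fourier identities
  have hstep1 : ∀ y : Fin d → ZMod n,
      (((E ×ˢ E).filter (fun p => nrm (p.1 - y) = nrm (p.2 - y))).card : ℝ)
      = (∑ s : ZMod n, Complex.normSq (∑ x ∈ E, chi n (s * nrm (x - y)))) / n := by
    intro y
    rw [eq_div_iff hn0.ne']
    have h := step1C E y
    have h2 : (((∑ s : ZMod n, Complex.normSq (∑ x ∈ E, chi n (s * nrm (x - y)))) : ℝ) : ℂ)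
        = (((((E ×ˢ E).filter (fun p => nrm (p.1 - y) = nrm (p.2 - y))).card : ℝ) * n : ℝ) : ℂ) := by
      push_cast
      rw [h]; ring
    exact_mod_cast h2.symm
  have hstep2 : ∀ s : ZMod n,
      ∑ y : Fin d → ZMod n, Complex.normSq (∑ x ∈ E, chi n (s * nrm (x - y)))
      = (n : ℝ) ^ d * (((E ×ˢ E).filter (fun p => ∀ i, s * p.1 i = s * p.2 i)).card : ℝ) := by
    intro s
    have h := step2C hodd E s
    have h2 : (((∑ y : Fin d → ZMod n, Complex.normSq (∑ x ∈ E, chi n (s * nrm (x - y)))) : ℝ) : ℂ)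
        = ((((n : ℝ) ^ d * (((E ×ˢ E).filter (fun p => ∀ i, s * p.1 i = s * p.2 i)).card : ℝ)) : ℝ) : ℂ) := by
      push_cast
      rw [h]
    exact_mod_cast h2
  -- value at s = 0
  have hzero : ∑ y ∈ E, Complex.normSq (∑ x ∈ E, chi n ((0 : ZMod n) * nrm (x - y)))
      = (E.card : ℝ) ^ 3 := by
    have h1 : ∀ y : Fin d → ZMod n, (∑ x ∈ E, chi n ((0 : ZMod n) * nrm (x - y)))
        = ((E.card : ℝ) : ℂ) := by
      intro y
      simp [zero_mul, chi_zero]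
    calc ∑ y ∈ E, Complex.normSq (∑ x ∈ E, chi n ((0 : ZMod n) * nrm (x - y)))
        = ∑ y ∈ E, Complex.normSq ((E.card : ℝ) : ℂ) :=
          Finset.sum_congr rfl fun y _ => by rw [h1 y]
      _ = ∑ y ∈ E, (E.card : ℝ) ^ 2 := by
          refine Finset.sum_congr rfl fun y _ => ?_
          rw [Complex.normSq_ofReal, sq]
      _ = (E.card : ℝ) ^ 3 := by
          rw [Finset.sum_const, nsmul_eq_mul]
          ring
  -- bound for s ≠ 0
  have herr : ∀ s ∈ (univ : Finset (ZMod n)).erase 0,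
      ∑ y ∈ E, Complex.normSq (∑ x ∈ E, chi n (s * nrm (x - y)))
      ≤ (n : ℝ) ^ d * (E.card : ℝ) * ((n / n.minFac : ℕ) : ℝ) ^ (d - 1) * (n.gcd s.val : ℝ) := by
    intro s hs
    have hsne : s ≠ 0 := (Finset.mem_erase.1 hs).1
    have h1 : ∑ y ∈ E, Complex.normSq (∑ x ∈ E, chi n (s * nrm (x - y)))
        ≤ ∑ y : Fin d → ZMod n, Complex.normSq (∑ x ∈ E, chi n (s * nrm (x - y))) :=
      Finset.sum_le_sum_of_subset_of_nonneg (Finset.subset_univ E)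
        (fun y _ _ => Complex.normSq_nonneg _)
    refine h1.trans ?_
    rw [hstep2 s]
    have h2 : (((E ×ˢ E).filter (fun p => ∀ i, s * p.1 i = s * p.2 i)).card : ℝ)
        ≤ ((E.card * (n.gcd s.val) ^ d : ℕ) : ℝ) := by
      exact_mod_cast pair_count E s
    have h3 : (E.card * (n.gcd s.val) ^ d : ℕ)
        ≤ E.card * ((n / n.minFac) ^ (d - 1) * n.gcd s.val) := by
      apply Nat.mul_le_mul_left
      have hpow : (n.gcd s.val) ^ d = (n.gcd s.val) ^ (d - 1) * n.gcd s.val := by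
        conv_lhs => rw [show d = (d - 1) + 1 by omega]
        rw [pow_succ]
      rw [hpow]
      exact Nat.mul_le_mul_right _ (Nat.pow_le_pow_left (K_le n s hsne) _)
    calc (n : ℝ) ^ d * (((E ×ˢ E).filter (fun p => ∀ i, s * p.1 i = s * p.2 i)).card : ℝ)
        ≤ (n : ℝ) ^ d * ((E.card * ((n / n.minFac) ^ (d - 1) * n.gcd s.val) : ℕ) : ℝ) := by
          apply mul_le_mul_of_nonneg_left _ (by positivity)
          refine h2.trans ?_
          exact_mod_cast h3
      _ = (n : ℝ) ^ d * (E.card : ℝ) * ((n / n.minFac : ℕ) : ℝ) ^ (d - 1) * (n.gcd s.val : ℝ) := by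
          push_cast
          ring
  -- the sum of gcds
  have hgcd : ∑ s ∈ (univ : Finset (ZMod n)).erase 0, (n.gcd s.val : ℝ)
      ≤ (n.divisors.card : ℝ) * n := by
    have := sum_gcd_le n
    calc ∑ s ∈ (univ : Finset (ZMod n)).erase 0, (n.gcd s.val : ℝ)
        = ((∑ s ∈ (univ : Finset (ZMod n)).erase 0, n.gcd s.val : ℕ) : ℝ) := by push_cast; rfl
      _ ≤ ((n.divisors.card * n : ℕ) : ℝ) := by exact_mod_cast this
      _ = (n.divisors.card : ℝ) * n := by push_cast; rfl
  -- main calculation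
  calc ∑ y ∈ E, ∑ t : ZMod n, ((E.filter (fun x => nrm (x - y) = t)).card : ℝ) ^ 2
      = ∑ y ∈ E, (((E ×ˢ E).filter (fun p => nrm (p.1 - y) = nrm (p.2 - y))).card : ℝ) :=
        Finset.sum_congr rfl fun y _ => step0 E y
    _ = ∑ y ∈ E, (∑ s : ZMod n, Complex.normSq (∑ x ∈ E, chi n (s * nrm (x - y)))) / n :=
        Finset.sum_congr rfl fun y _ => hstep1 y
    _ = (∑ y ∈ E, ∑ s : ZMod n, Complex.normSq (∑ x ∈ E, chi n (s * nrm (x - y)))) / n := by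
        rw [Finset.sum_div]
    _ = (∑ s : ZMod n, ∑ y ∈ E, Complex.normSq (∑ x ∈ E, chi n (s * nrm (x - y)))) / n := by
        rw [Finset.sum_comm]
    _ = (∑ y ∈ E, Complex.normSq (∑ x ∈ E, chi n ((0 : ZMod n) * nrm (x - y)))
          + ∑ s ∈ (univ : Finset (ZMod n)).erase 0,
              ∑ y ∈ E, Complex.normSq (∑ x ∈ E, chi n (s * nrm (x - y)))) / n := by
        congr 1
        exact (Finset.add_sum_erase _
          (fun s : ZMod n => ∑ y ∈ E, Complex.normSq (∑ x ∈ E, chi n (s * nrm (x - y))))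
          (Finset.mem_univ (0 : ZMod n))).symm
    _ = (E.card : ℝ) ^ 3 / n + (∑ s ∈ (univ : Finset (ZMod n)).erase 0,
              ∑ y ∈ E, Complex.normSq (∑ x ∈ E, chi n (s * nrm (x - y)))) / n := by
        rw [hzero, add_div]
    _ ≤ (E.card : ℝ) ^ 3 / n +
        ((n : ℝ) ^ d * (E.card : ℝ) * ((n / n.minFac : ℕ) : ℝ) ^ (d - 1)
          * ((n.divisors.card : ℝ) * n)) / n := by
        gcongr
        calc ∑ s ∈ (univ : Finset (ZMod n)).erase 0,
              ∑ y ∈ E, Complex.normSq (∑ x ∈ E, chi n (s * nrm (x - y)))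
            ≤ ∑ s ∈ (univ : Finset (ZMod n)).erase 0,
              (n : ℝ) ^ d * (E.card : ℝ) * ((n / n.minFac : ℕ) : ℝ) ^ (d - 1)
                * (n.gcd s.val : ℝ) := Finset.sum_le_sum herr
          _ = (n : ℝ) ^ d * (E.card : ℝ) * ((n / n.minFac : ℕ) : ℝ) ^ (d - 1)
                * ∑ s ∈ (univ : Finset (ZMod n)).erase 0, (n.gcd s.val : ℝ) := by
              rw [Finset.mul_sum]
          _ ≤ (n : ℝ) ^ d * (E.card : ℝ) * ((n / n.minFac : ℕ) : ℝ) ^ (d - 1)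
                * ((n.divisors.card : ℝ) * n) := by
              apply mul_le_mul_of_nonneg_left hgcd (by positivity)
    _ ≤ (E.card : ℝ) ^ 3 / n +
        (n.divisors.card : ℝ) * (n : ℝ) ^ (2 * d - 1) * (E.card : ℝ) / (n.minFac : ℝ) ^ (d - 1) := by
        refine add_le_add (le_refl _) ?_
        have hcast : ((n / n.minFac : ℕ) : ℝ) ≤ (n : ℝ) / (n.minFac : ℝ) := Nat.cast_div_le
        calc ((n : ℝ) ^ d * (E.card : ℝ) * ((n / n.minFac : ℕ) : ℝ) ^ (d - 1)
              * ((n.divisors.card : ℝ) * n)) / n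
            = (n : ℝ) ^ d * (E.card : ℝ) * ((n / n.minFac : ℕ) : ℝ) ^ (d - 1)
              * (n.divisors.card : ℝ) := by
              field_simp
          _ ≤ (n : ℝ) ^ d * (E.card : ℝ) * ((n : ℝ) / (n.minFac : ℝ)) ^ (d - 1)
              * (n.divisors.card : ℝ) := by
              gcongr
          _ = (n.divisors.card : ℝ) * (n : ℝ) ^ (2 * d - 1) * (E.card : ℝ)
              / (n.minFac : ℝ) ^ (d - 1) := by
              rw [div_pow, show (n : ℝ) ^ d * (E.card : ℝ) * ((n : ℝ) ^ (d - 1) / (n.minFac : ℝ) ^ (d - 1)) * (n.divisors.card : ℝ) = (n.divisors.card : ℝ) * ((n : ℝ) ^ d * (n : ℝ) ^ (d - 1)) * (E.card : ℝ) / (n.minFac : ℝ) ^ (d - 1) by ring, ← pow_add, show d + (d - 1) = 2 * d - 1 by omega]
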